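/- Let Q be a finite quiver whose vertex set Q₀ has at least two elements, and suppose there exists α : Q₀ → ℤ with α i ≥ 1 for every vertex i and (e_i, α) ≤ −1 for every vertex i. Then for every natural number N there exists β : Q₀ → ℤ such that β i ≥ 1 for every i, (e_i, β) ≤ −1 for every i, the greatest common divisor of the values {β i : i ∈ Q₀} equals 1, and (β, β) ≤ −N. -/

import Mathlib

/-!
Fix two distinct vertices `i ≠ j` and put `β = m α + e_i` with `m` a large multiple of
`α j`. Then `(e_k, β) = m (e_k, α) + (e_k, e_i) ≤ -m + 2 < 0`, and since
`(β, β) = ∑ β_k (e_k, β)` this gives `(β, β) ≤ -∑ β_k ≤ -m`. Finally `β i = m α i + 1` is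
coprime to `m`, hence to `β j = m α j ∣ m²`, so `β` is indivisible.
-/

/-- The symmetrized Euler (Tits) form of a finite quiver with vertex set `V`,
arrow set `E`, and head and tail maps `h t : E → V`. -/
def titsForm {V E : Type} [Fintype V] [Fintype E] (h t : E → V) (α β : V → ℤ) : ℤ :=
  2 * ∑ i, α i * β i - ∑ a, (α (t a) * β (h a) + α (h a) * β (t a))

/-- The coordinate vector `e_i`. -/
def unitVec {V : Type} [DecidableEq V] (i : V) : V → ℤ := fun j => if j = i then 1 else 0

theorem Finset.gcd_eq_one_of_isCoprime {R ι : Type*} [CommRing R] [IsDomain R]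
    [NormalizedGCDMonoid R] {s : Finset ι} {f : ι → R} {i j : ι} (hi : i ∈ s) (hj : j ∈ s)
    (hij : IsCoprime (f i) (f j)) : s.gcd f = 1 := by
  rw [← Finset.normalize_gcd, normalize_eq_one]
  exact hij.isUnit_of_dvd' (Finset.gcd_dvd hi) (Finset.gcd_dvd hj)

theorem isCoprime_mul_add_one_mul {R : Type*} [CommRing R] {m a b : R} (ha : a ∣ m) :
    IsCoprime (m * b + 1) (m * a) := by
  have hm : IsCoprime (m * b + 1) m := ⟨1, -b, by ring⟩
  exact (hm.pow_right (n := 2)).of_isCoprime_of_dvd_right (by rw [sq]; exact mul_dvd_mul_left m ha)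

theorem unitVec_nonneg {V : Type} [DecidableEq V] (i j : V) : 0 ≤ unitVec i j := by
  unfold unitVec; split <;> norm_num

section titsForm

variable {V E : Type} [Fintype V] [Fintype E] (h t : E → V)

theorem titsForm_add_right (γ α δ : V → ℤ) :
    titsForm h t γ (α + δ) = titsForm h t γ α + titsForm h t γ δ := by
  simp only [titsForm, Pi.add_apply, mul_add, Finset.sum_add_distrib]
  ring

theorem titsForm_smul_right (γ α : V → ℤ) (m : ℤ) :
    titsForm h t γ (m • α) = m * titsForm h t γ α := by
  simp only [titsForm, Pi.smul_apply, smul_eq_mul, mul_sub, Finset.mul_sum]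
  congr 1
  · exact Finset.sum_congr rfl fun _ _ => by ring
  · exact Finset.sum_congr rfl fun _ _ => by ring

variable [DecidableEq V]

theorem titsForm_eq_sum_mul_unitVec (γ β : V → ℤ) :
    titsForm h t γ β = ∑ j, γ j * titsForm h t (unitVec j) β := by
  simp only [titsForm, unitVec, ite_mul, one_mul, zero_mul, Finset.sum_ite_eq',
    Finset.mem_univ, if_true, mul_sub, Finset.mul_sum, mul_add, Finset.sum_sub_distrib]
  rw [Finset.sum_comm (s := Finset.univ) (t := Finset.univ)]
  congr 1
  · exact Finset.sum_congr rfl fun _ _ => by ring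
  · simp [Finset.sum_add_distrib, mul_ite]

theorem titsForm_unitVec_unitVec_le_two (j i : V) :
    titsForm h t (unitVec j) (unitVec i) ≤ 2 := by
  have hdiag : ∑ k, unitVec j k * unitVec i k ≤ 1 := by
    simp only [unitVec, ite_mul, one_mul, zero_mul, Finset.sum_ite_eq', Finset.mem_univ, if_true]
    split <;> simp
  have harrows :
      0 ≤ ∑ a, (unitVec j (t a) * unitVec i (h a) + unitVec j (h a) * unitVec i (t a)) :=
    Finset.sum_nonneg fun a _ => by
      have := unitVec_nonneg j (t a); have := unitVec_nonneg i (h a)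
      have := unitVec_nonneg j (h a); have := unitVec_nonneg i (t a)
      positivity
  unfold titsForm
  omega

theorem titsForm_self_le_neg_sum {β : V → ℤ} (hβ : ∀ j, 0 ≤ β j)
    (hneg : ∀ j, titsForm h t (unitVec j) β ≤ -1) :
    titsForm h t β β ≤ -∑ j, β j := by
  rw [titsForm_eq_sum_mul_unitVec, ← Finset.sum_neg_distrib]
  exact Finset.sum_le_sum fun j _ => by nlinarith [hβ j, hneg j]

end titsForm

/-- If the quiver has at least two vertices and the interior of the cone `C(Q)` contains a
lattice point, then for every `N` there is an indivisible lattice point `β` in the interior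
of the cone with `(β, β) ≤ -N`. -/
theorem exists_indivisible_titsForm_le {V E : Type} [Fintype V] [Fintype E] [DecidableEq V]
    (h t : E → V) (hV : 1 < Fintype.card V)
    (α : V → ℤ) (hα : ∀ i, 1 ≤ α i) (hαneg : ∀ i, titsForm h t (unitVec i) α ≤ -1)
    (N : ℕ) :
    ∃ β : V → ℤ, (∀ i, 1 ≤ β i) ∧ (∀ i, titsForm h t (unitVec i) β ≤ -1) ∧
      Finset.univ.gcd β = 1 ∧ titsForm h t β β ≤ -(N : ℤ) := by
  obtain ⟨i, j, hij⟩ := Fintype.exists_pair_of_one_lt_card hV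
  set m : ℤ := (N + 3) * α j
  have hmN : (N : ℤ) + 3 ≤ m := le_mul_of_one_le_right (by positivity) (hα j)
  set β : V → ℤ := m • α + unitVec i
  have hβ : ∀ k, β k = m * α k + unitVec i k := fun _ => rfl
  have hβpos : ∀ k, 1 ≤ β k := fun k => by nlinarith [hβ k, hα k, unitVec_nonneg i k]
  have hβneg : ∀ k, titsForm h t (unitVec k) β ≤ -1 := fun k => by
    rw [titsForm_add_right, titsForm_smul_right]
    nlinarith [hαneg k, titsForm_unitVec_unitVec_le_two h t k i]
  have hβnonneg : ∀ k, 0 ≤ β k := fun k => zero_le_one.trans (hβpos k)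
  refine ⟨β, hβpos, hβneg, Finset.gcd_eq_one_of_isCoprime (Finset.mem_univ i)
    (Finset.mem_univ j) ?_, ?_⟩
  · simpa [hβ, unitVec, Ne.symm hij] using
      isCoprime_mul_add_one_mul (b := α i) (dvd_mul_left (α j) (N + 3))
  · calc titsForm h t β β ≤ -∑ k, β k :=
          titsForm_self_le_neg_sum h t hβnonneg hβneg
      _ ≤ -β i := neg_le_neg (Finset.single_le_sum (fun k _ => hβnonneg k) (Finset.mem_univ i))
      _ ≤ -(N : ℤ) := by simp only [hβ, unitVec, if_true]; nlinarith [hα i]
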